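/- arXiv:1505.06890 — 2 statements merged into one kernel-verified Lean document; each statement's English description precedes it below -/
import Mathlib

section
/- Let ν be a locally finite Borel measure on (−∞,0) satisfying the shift-domination condition with increasing rate κ: (0,∞) → (0,∞), and let H be a real separable Hilbert space. Let X, Y: ℝ → H be Borel measurable with X(θ) = Y(θ) for ν-almost every θ ∈ (−∞,0). Then for every t > 0, ∫_0^t (∫_{(−∞,0)} |X(s+θ) − Y(s+θ)|² ν(dθ)) ds ≤ ν([−t,0)) · ∫_0^t |X(s) − Y(s)|² ds. Consequently ∫_0^t ‖X_s − Y_s‖²_{𝒞ν} ds ≤ (1 + ν([−t,0))) · ∫_0^t |X(s) − Y(s)|² ds. -/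
open MeasureTheory Set
open scoped ENNReal

/-!
A left shift by `s > 0` maps `ν`-null subsets of `(-∞,0)` to `ν`-null sets, so `X(s+θ) = Y(s+θ)`
for `ν`-a.e. `θ < -s`; the inner integral therefore only sees `θ ∈ [-s,0) ⊆ [-t,0)` and values of
`X - Y` on `[0,t)`. Tonelli and the translation invariance of Lebesgue measure then give the factor
`ν([-t,0))`.
-/

theorem lintegral_lintegral_add_eq {G : Type*} [MeasurableSpace G] [AddGroup G]
    [MeasurableAdd₂ G] (μ ν : Measure G) [μ.IsAddRightInvariant] [SFinite μ]
    [SFinite ν] {g : G → ℝ≥0∞} (hg : Measurable g) :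
    ∫⁻ s, ∫⁻ θ, g (s + θ) ∂ν ∂μ = ν univ * ∫⁻ u, g u ∂μ := by
  rw [lintegral_lintegral_swap (f := fun s θ => g (s + θ)) (hg.comp measurable_add).aemeasurable]
  simp only [lintegral_add_right_eq_self g, lintegral_const, mul_comm]

def ShiftDominated (ν : Measure ℝ) (κ : ℝ → ℝ) : Prop :=
  ∀ A : Set ℝ, MeasurableSet A → A ⊆ Iio 0 → ∀ t : ℝ, 0 < t →
    ν ((fun a => a - t) '' A) ≤ ENNReal.ofReal (κ t) * ν A

namespace ShiftDominated

variable {ν : Measure ℝ} {κ : ℝ → ℝ}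

theorem measure_image_sub_eq_zero (hν : ShiftDominated ν κ) {A : Set ℝ}
    (hA : MeasurableSet A) (hA0 : A ⊆ Iio 0) (hνA : ν A = 0) {s : ℝ} (hs : 0 < s) :
    ν ((fun a => a - s) '' A) = 0 :=
  le_antisymm (by simpa [hνA] using hν A hA hA0 s hs) zero_le

theorem ae_add_of_ae_restrict_Iio (hν : ShiftDominated ν κ) {p : ℝ → Prop}
    (hp : MeasurableSet {θ | p θ}) (h : ∀ᵐ θ ∂ν.restrict (Iio 0), p θ) {s : ℝ} (hs : 0 < s) :
    ∀ᵐ θ ∂ν, s + θ < 0 → p (s + θ) := by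
  have hnull : ν ({θ | p θ}ᶜ ∩ Iio 0) = 0 := by
    rw [← Measure.restrict_apply hp.compl]
    exact ae_iff.mp h
  rw [ae_iff]
  refine measure_mono_null ?_
    (hν.measure_image_sub_eq_zero (hp.compl.inter measurableSet_Iio) inter_subset_right hnull hs)
  intro θ hθ
  obtain ⟨hneg, hnp⟩ := Classical.not_imp.mp hθ
  exact ⟨s + θ, ⟨hnp, hneg⟩, by ring⟩

theorem setLIntegral_Iio_add_eq (hν : ShiftDominated ν κ) {f : ℝ → ℝ≥0∞} (hf : Measurable f)
    (hf0 : ∀ᵐ θ ∂ν.restrict (Iio 0), f θ = 0) {s t : ℝ} (hs : s ∈ Ioc 0 t) :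
    ∫⁻ θ in Iio 0, f (s + θ) ∂ν = ∫⁻ θ in Ico (-t) 0, (Ico 0 t).indicator f (s + θ) ∂ν := by
  have hvanish := hν.ae_add_of_ae_restrict_Iio (p := fun θ => f θ = 0)
    (hf (measurableSet_singleton 0)) hf0 hs.1
  have heq : ∀ᵐ θ ∂ν.restrict (Iio 0),
      f (s + θ) = (Ico (-t) 0).indicator (fun θ => (Ico 0 t).indicator f (s + θ)) θ := by
    filter_upwards [ae_restrict_mem measurableSet_Iio, ae_restrict_of_ae hvanish]
      with θ (hθ : θ < 0) hθf
    rcases lt_or_ge (s + θ) 0 with hneg | hnonneg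
    · have hθt : s + θ ∉ Ico 0 t := fun h => (not_le.mpr hneg) h.1
      rw [hθf hneg, eq_comm, indicator_apply_eq_zero]
      exact fun _ => indicator_of_notMem hθt f
    · rw [indicator_of_mem (show θ ∈ Ico (-t) 0 from ⟨by linarith [hs.2], hθ⟩),
        indicator_of_mem (show s + θ ∈ Ico 0 t from ⟨hnonneg, by linarith [hs.2]⟩)]
  rw [setLIntegral_congr_fun_ae measurableSet_Iio (ae_restrict_iff' measurableSet_Iio |>.mp heq),
    setLIntegral_indicator measurableSet_Ico, Ico_inter_Iio, min_self]

theorem lintegral_Ioc_setLIntegral_Iio_add_le (hν : ShiftDominated ν κ) {t : ℝ}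
    (hfin : ν (Ico (-t) 0) < ∞) {f : ℝ → ℝ≥0∞} (hf : Measurable f)
    (hf0 : ∀ᵐ θ ∂ν.restrict (Iio 0), f θ = 0) :
    ∫⁻ s in Ioc 0 t, ∫⁻ θ in Iio 0, f (s + θ) ∂ν ≤ ν (Ico (-t) 0) * ∫⁻ s in Ioc 0 t, f s := by
  have : IsFiniteMeasure (ν.restrict (Ico (-t) 0)) :=
    ⟨by rwa [Measure.restrict_apply_univ]⟩
  calc ∫⁻ s in Ioc 0 t, ∫⁻ θ in Iio 0, f (s + θ) ∂ν
      = ∫⁻ s in Ioc 0 t, ∫⁻ θ in Ico (-t) 0, (Ico 0 t).indicator f (s + θ) ∂ν :=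
        setLIntegral_congr_fun measurableSet_Ioc fun s hs => hν.setLIntegral_Iio_add_eq hf hf0 hs
    _ ≤ ∫⁻ s, ∫⁻ θ in Ico (-t) 0, (Ico 0 t).indicator f (s + θ) ∂ν :=
        setLIntegral_le_lintegral _ _
    _ = ν (Ico (-t) 0) * ∫⁻ u in Ico 0 t, f u := by
        rw [lintegral_lintegral_add_eq _ _ (hf.indicator measurableSet_Ico),
          Measure.restrict_apply_univ, lintegral_indicator measurableSet_Ico]
    _ = ν (Ico (-t) 0) * ∫⁻ s in Ioc 0 t, f s := by
        rw [Measure.restrict_congr_set Ico_ae_eq_Ioc]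

end ShiftDominated

theorem stmt_5_general {H : Type*} [NormedAddCommGroup H] [TopologicalSpace.SeparableSpace H]
    [MeasurableSpace H] [BorelSpace H]
    (ν : Measure ℝ)
    (hfin : ∀ t : ℝ, 0 < t → ν (Ico (-t) 0) < ∞)
    (κ : ℝ → ℝ)
    (hshift : ∀ A : Set ℝ, MeasurableSet A → A ⊆ Iio 0 → ∀ t : ℝ, 0 < t →
      ν ((fun a => a - t) '' A) ≤ ENNReal.ofReal (κ t) * ν A)
    (X Y : ℝ → H) (hX : Measurable X) (hY : Measurable Y)
    (hae : ∀ᵐ θ ∂(ν.restrict (Iio 0)), X θ = Y θ) :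
    ∀ t : ℝ, 0 < t →
      (∫⁻ s in Ioc (0:ℝ) t, ∫⁻ θ in Iio 0, (‖X (s + θ) - Y (s + θ)‖₊ : ℝ≥0∞) ^ 2 ∂ν)
        ≤ ν (Ico (-t) 0) * ∫⁻ s in Ioc (0:ℝ) t, (‖X s - Y s‖₊ : ℝ≥0∞) ^ 2 ∧
      (∫⁻ s in Ioc (0:ℝ) t,
          ((∫⁻ θ in Iio 0, (‖X (s + θ) - Y (s + θ)‖₊ : ℝ≥0∞) ^ 2 ∂ν)
            + (‖X s - Y s‖₊ : ℝ≥0∞) ^ 2))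
        ≤ (1 + ν (Ico (-t) 0)) * ∫⁻ s in Ioc (0:ℝ) t, (‖X s - Y s‖₊ : ℝ≥0∞) ^ 2 := by
  intro t ht
  have hf : Measurable fun u => (‖X u - Y u‖₊ : ℝ≥0∞) ^ 2 :=
    ((hX.sub hY).nnnorm.coe_nnreal_ennreal).pow_const 2
  have hf0 : ∀ᵐ θ ∂ν.restrict (Iio 0), (‖X θ - Y θ‖₊ : ℝ≥0∞) ^ 2 = 0 := by
    filter_upwards [hae] with θ hθ
    simp [hθ]
  have hmain := ShiftDominated.lintegral_Ioc_setLIntegral_Iio_add_le hshift (hfin t ht) hf hf0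
  refine ⟨hmain, ?_⟩
  rw [lintegral_add_right _ hf, add_mul, one_mul, add_comm]
  gcongr

/-- If `ν` is a locally finite Borel measure on `(-∞,0)` satisfying the
shift-domination condition with increasing rate `κ`, `H` is a real separable Hilbert space,
and `X, Y : ℝ → H` are Borel measurable with `X = Y` ν-a.e. on `(-∞,0)`, then for every `t > 0`
`∫_0^t (∫_{(-∞,0)} |X(s+θ) - Y(s+θ)|² ν(dθ)) ds ≤ ν([-t,0)) ∫_0^t |X(s) - Y(s)|² ds`,
and consequently `∫_0^t ‖X_s - Y_s‖²_{𝒞ν} ds ≤ (1 + ν([-t,0))) ∫_0^t |X(s) - Y(s)|² ds`. -/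
theorem stmt_5 {H : Type*} [NormedAddCommGroup H] [InnerProductSpace ℝ H]
    [CompleteSpace H] [TopologicalSpace.SeparableSpace H]
    [MeasurableSpace H] [BorelSpace H]
    (ν : Measure ℝ) (hconc : ν (Ici 0) = 0)
    (hfin : ∀ t : ℝ, 0 < t → ν (Ico (-t) 0) < ∞)
    (κ : ℝ → ℝ) (hκ_pos : ∀ t, 0 < t → 0 < κ t)
    (hκ_mono : ∀ s t, 0 < s → s ≤ t → κ s ≤ κ t)
    (hshift : ∀ A : Set ℝ, MeasurableSet A → A ⊆ Iio 0 → ∀ t : ℝ, 0 < t →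
      ν ((fun a => a - t) '' A) ≤ ENNReal.ofReal (κ t) * ν A)
    (X Y : ℝ → H) (hX : Measurable X) (hY : Measurable Y)
    (hae : ∀ᵐ θ ∂(ν.restrict (Iio 0)), X θ = Y θ) :
    ∀ t : ℝ, 0 < t →
      (∫⁻ s in Ioc (0:ℝ) t, ∫⁻ θ in Iio 0, (‖X (s + θ) - Y (s + θ)‖₊ : ℝ≥0∞) ^ 2 ∂ν)
        ≤ ν (Ico (-t) 0) * ∫⁻ s in Ioc (0:ℝ) t, (‖X s - Y s‖₊ : ℝ≥0∞) ^ 2 ∧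
      (∫⁻ s in Ioc (0:ℝ) t,
          ((∫⁻ θ in Iio 0, (‖X (s + θ) - Y (s + θ)‖₊ : ℝ≥0∞) ^ 2 ∂ν)
            + (‖X s - Y s‖₊ : ℝ≥0∞) ^ 2))
        ≤ (1 + ν (Ico (-t) 0)) * ∫⁻ s in Ioc (0:ℝ) t, (‖X s - Y s‖₊ : ℝ≥0∞) ^ 2 :=
  stmt_5_general ν hfin κ hshift X Y hX hY hae
end

section
/- (Log-Harnack inequality implies L² gradient estimate.) Let (E,d) be a metric space equipped with its Borel σ-algebra, and let (μ_ξ)_{ξ∈E} be a Markov kernel on E (each μ_ξ a Borel probability measure, with ξ ↦ μ_ξ(A) measurable for Borel A). Define P f(ξ) := ∫_E f dμ_ξ for bounded measurable f. Suppose there is C > 0 such that for every bounded measurable f with inf f > 0 and all ξ, η ∈ E: ∫ log f dμ_η ≤ log(∫ f dμ_ξ) + C·d(ξ,η)². Then for every bounded measurable f: E → ℝ and every ξ ∈ E, limsup_{η→ξ, η≠ξ} |P f(η) − P f(ξ)| / d(η,ξ) ≤ √( 2C·( P f²(ξ) − (P f(ξ))² ) ). -/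
/-!
Applying the log-Harnack inequality to `1 + s (f - P f(ξ))`, whose `μ ξ`-mean is `1`, and using
`log (1 + x) ≥ x - x² / 2 - 2 |x|³` gives
`s |P f(η) - P f(ξ)| ≤ C d(ξ,η)² + s² / 2 ∫ (f - P f(ξ))² dμ_η + O(s³)`.
For `s = t d(ξ,η)` this bounds the difference quotient by
`C / t + t / 2 ∫ (f - P f(ξ))² dμ_η + O(d(ξ,η))`. The same inequality with a fixed small `s`
shows that `η ↦ P g(η)` is continuous for bounded measurable `g`, so the middle term tends to
`t / 2 · Var_{μ_ξ} f`; optimising over `t` gives `√(2 C Var_{μ_ξ} f)`.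
-/

open MeasureTheory Filter Topology ProbabilityTheory

lemma Real.sub_sq_div_two_sub_le_log_one_add {x : ℝ} (hx : |x| ≤ 1 / 2) :
    x - x ^ 2 / 2 - 2 * |x| ^ 3 ≤ Real.log (1 + x) := by
  have hrem := Real.abs_log_sub_add_sum_range_le (x := -x) (by rw [abs_neg]; linarith) 2
  simp only [Finset.sum_range_succ, Finset.range_zero, Finset.sum_empty, abs_neg,
    sub_neg_eq_add] at hrem
  have hcube : |x| ^ 3 / (1 - |x|) ≤ 2 * |x| ^ 3 := by
    rw [div_le_iff₀ (by linarith)]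
    nlinarith [pow_nonneg (abs_nonneg x) 3]
  norm_num at hrem
  linarith [(abs_le.1 hrem).1]

lemma Real.abs_log_one_add_le_one {x : ℝ} (hx : |x| ≤ 1 / 2) : |Real.log (1 + x)| ≤ 1 := by
  have hlower := Real.sub_sq_div_two_sub_le_log_one_add hx
  have hupper := Real.log_le_sub_one_of_pos (x := 1 + x) (by linarith [(abs_le.1 hx).1])
  have hsq : x ^ 2 ≤ (1 / 2) ^ 2 := by rw [← sq_abs]; gcongr
  have hcube : |x| ^ 3 ≤ (1 / 2) ^ 3 := by gcongr
  rw [abs_le]; constructor <;> linarith [abs_le.1 hx]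

lemma Measurable.integrable_of_abs_le {α : Type*} [MeasurableSpace α] {μ : Measure α}
    [IsFiniteMeasure μ] {g : α → ℝ} (hg : Measurable g) {K : ℝ} (hK : ∀ x, |g x| ≤ K) :
    Integrable g μ :=
  .of_bound hg.aestronglyMeasurable K (.of_forall hK)

section LogHarnack

variable {E : Type*} [MetricSpace E] [MeasurableSpace E]

def LogHarnack (μ : E → Measure E) (C : ℝ) : Prop :=
  ∀ f : E → ℝ, Measurable f → (∃ M, ∀ x, |f x| ≤ M) →
    (∃ δ > 0, ∀ x, δ ≤ f x) → ∀ ξ η : E,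
      (∫ x, Real.log (f x) ∂(μ η)) ≤ Real.log (∫ x, f x ∂(μ ξ)) + C * dist ξ η ^ 2

variable {μ : E → Measure E} [∀ ξ, IsProbabilityMeasure (μ ξ)] {C : ℝ}

lemma LogHarnack.mul_integral_le (hLH : LogHarnack μ C) {g : E → ℝ} (hg : Measurable g)
    {K : ℝ} (hK : ∀ x, |g x| ≤ K) {ξ : E} (hg₀ : ∫ x, g x ∂(μ ξ) = 0)
    {s : ℝ} (hs : 0 < s) (hsK : s * K ≤ 1 / 2) (η : E) :
    s * ∫ x, g x ∂(μ η) ≤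
      C * dist ξ η ^ 2 + s ^ 2 / 2 * ∫ x, g x ^ 2 ∂(μ η) + 2 * s ^ 3 * K ^ 3 := by
  have hsg : ∀ x, |s * g x| ≤ 1 / 2 := fun x => by
    rw [abs_mul, abs_of_pos hs]; nlinarith [hK x]
  have hlog :
      ∀ x, s * g x - s ^ 2 / 2 * g x ^ 2 - 2 * s ^ 3 * K ^ 3 ≤ Real.log (1 + s * g x) := by
    intro x
    have hcube : |s * g x| ^ 3 ≤ (s * K) ^ 3 := by
      gcongr
      rw [abs_mul, abs_of_pos hs]; exact mul_le_mul_of_nonneg_left (hK x) hs.le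
    nlinarith [Real.sub_sq_div_two_sub_le_log_one_add (hsg x)]
  have hF : Measurable fun x => 1 + s * g x := measurable_const.add (hg.const_mul s)
  have hg_int : ∀ ν : Measure E, [IsFiniteMeasure ν] → Integrable g ν :=
    fun _ _ => hg.integrable_of_abs_le hK
  have hg2_int : Integrable (fun x => g x ^ 2) (μ η) :=
    (hg.pow_const 2).integrable_of_abs_le (K := K ^ 2) fun x => by
      rw [abs_pow]; exact pow_le_pow_left₀ (abs_nonneg _) (hK x) 2
  have hmean : ∫ x, (1 + s * g x) ∂(μ ξ) = 1 := by
    rw [integral_add (integrable_const 1) ((hg_int _).const_mul s), integral_const_mul, hg₀]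
    simp
  have hharnack := hLH _ hF
    ⟨3 / 2, fun x => abs_le.2 ⟨by linarith [abs_le.1 (hsg x)], by linarith [abs_le.1 (hsg x)]⟩⟩
    ⟨1 / 2, by norm_num, fun x => by linarith [(abs_le.1 (hsg x)).1]⟩ ξ η
  rw [hmean, Real.log_one, zero_add] at hharnack
  have hquad : Integrable (fun x => s * g x - s ^ 2 / 2 * g x ^ 2) (μ η) :=
    ((hg_int _).const_mul s).sub (hg2_int.const_mul _)
  have hmono : ∫ x, (s * g x - s ^ 2 / 2 * g x ^ 2 - 2 * s ^ 3 * K ^ 3) ∂(μ η) ≤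
      ∫ x, Real.log (1 + s * g x) ∂(μ η) :=
    integral_mono (hquad.sub (integrable_const _))
      (hF.log.integrable_of_abs_le fun x => Real.abs_log_one_add_le_one (hsg x)) hlog
  rw [integral_sub hquad (integrable_const _),
    integral_sub ((hg_int _).const_mul s) (hg2_int.const_mul _), integral_const_mul,
    integral_const_mul, integral_const] at hmono
  simp only [probReal_univ, one_smul] at hmono
  linarith

lemma LogHarnack.mul_abs_integral_le (hLH : LogHarnack μ C) {g : E → ℝ} (hg : Measurable g)
    {K : ℝ} (hK : ∀ x, |g x| ≤ K) {ξ : E} (hg₀ : ∫ x, g x ∂(μ ξ) = 0)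
    {s : ℝ} (hs : 0 < s) (hsK : s * K ≤ 1 / 2) (η : E) :
    s * |∫ x, g x ∂(μ η)| ≤
      C * dist ξ η ^ 2 + s ^ 2 / 2 * ∫ x, g x ^ 2 ∂(μ η) + 2 * s ^ 3 * K ^ 3 := by
  have hpos := hLH.mul_integral_le hg hK hg₀ hs hsK η
  have hneg := hLH.mul_integral_le hg.neg (g := -g) (fun x => (abs_neg (g x)).trans_le (hK x))
    (ξ := ξ) (by simp [integral_neg, hg₀]) hs hsK η
  simp only [Pi.neg_apply, integral_neg, neg_sq] at hneg
  rcases abs_cases (∫ x, g x ∂(μ η)) with ⟨habs, -⟩ | ⟨habs, -⟩ <;> rw [habs] <;> linarith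

lemma LogHarnack.eventually_integral_lt (hLH : LogHarnack μ C) {g : E → ℝ} (hg : Measurable g)
    {K : ℝ} (hK : ∀ x, |g x| ≤ K) (ξ : E) {ε : ℝ} (hε : 0 < ε) :
    ∀ᶠ η in 𝓝 ξ, ∫ x, g x ∂(μ η) < ∫ x, g x ∂(μ ξ) + ε := by
  set m := ∫ x, g x ∂(μ ξ)
  set L := K + |m|
  have hL : ∀ x, |g x - m| ≤ L := fun x => (abs_sub _ _).trans (by linarith [hK x])
  have hL_sq : ∀ x, (g x - m) ^ 2 ≤ L ^ 2 := fun x => by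
    rw [← sq_abs]; exact pow_le_pow_left₀ (abs_nonneg _) (hL x) 2
  have hg_int : ∀ ν : Measure E, [IsFiniteMeasure ν] → Integrable g ν :=
    fun _ _ => hg.integrable_of_abs_le hK
  have hcentered : ∀ η, ∫ x, (g x - m) ∂(μ η) = ∫ x, g x ∂(μ η) - m := fun η => by
    rw [integral_sub (hg_int _) (integrable_const m)]; simp
  obtain ⟨s, hs, hsL, hsmall⟩ :
      ∃ s > 0, s * L < 1 / 2 ∧ s * L ^ 2 / 2 + 2 * s ^ 2 * L ^ 3 < ε / 2 := by
    have h₁ : ∀ᶠ s in 𝓝 (0 : ℝ), s * L < 1 / 2 :=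
      (by fun_prop : Continuous fun s : ℝ => s * L).continuousAt.eventually_lt continuousAt_const
        (by norm_num)
    have h₂ : ∀ᶠ s in 𝓝 (0 : ℝ), s * L ^ 2 / 2 + 2 * s ^ 2 * L ^ 3 < ε / 2 :=
      (by fun_prop : Continuous fun s : ℝ => s * L ^ 2 / 2 + 2 * s ^ 2 * L ^ 3).continuousAt
        |>.eventually_lt continuousAt_const (by simpa using half_pos hε)
    exact (h₁.and h₂).exists_gt
  have hnear : ∀ᶠ η in 𝓝 ξ, C * dist ξ η ^ 2 < s * (ε / 2) :=
    (by fun_prop : Continuous fun η => C * dist ξ η ^ 2).continuousAt.eventually_lt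
      continuousAt_const (by simpa using mul_pos hs (half_pos hε))
  filter_upwards [hnear] with η hη
  have hbound := hLH.mul_integral_le (hg.sub_const m) hL (ξ := ξ)
    (by rw [hcentered, sub_self]) hs hsL.le η
  have hsq : ∫ x, (g x - m) ^ 2 ∂(μ η) ≤ L ^ 2 := by
    simpa using integral_mono_of_nonneg (.of_forall fun x => sq_nonneg (g x - m))
      (integrable_const (μ := μ η) (L ^ 2)) (.of_forall hL_sq)
  rw [hcentered] at hbound
  have : s * (∫ x, g x ∂(μ η) - m) < s * ε := by
    nlinarith [mul_le_mul_of_nonneg_left hsq (by positivity : (0 : ℝ) ≤ s ^ 2 / 2)]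
  linarith [lt_of_mul_lt_mul_left this hs.le]

lemma LogHarnack.tendsto_integral (hLH : LogHarnack μ C) {g : E → ℝ} (hg : Measurable g)
    {K : ℝ} (hK : ∀ x, |g x| ≤ K) (ξ : E) :
    Tendsto (fun η => ∫ x, g x ∂(μ η)) (𝓝 ξ) (𝓝 (∫ x, g x ∂(μ ξ))) := by
  refine tendsto_order.2 ⟨fun a ha => ?_, fun a ha => ?_⟩
  · filter_upwards [hLH.eventually_integral_lt hg.neg (g := -g)
      (fun x => (abs_neg (g x)).trans_le (hK x)) ξ (sub_pos.2 ha)] with η hη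
    simp only [Pi.neg_apply, integral_neg] at hη
    linarith
  · simpa using hLH.eventually_integral_lt hg hK ξ (sub_pos.2 ha)

lemma LogHarnack.abs_integral_sub_le (hLH : LogHarnack μ C) {f : E → ℝ} (hf : Measurable f)
    {ξ : E} {K : ℝ} (hK : ∀ x, |f x - ∫ y, f y ∂(μ ξ)| ≤ K) {t : ℝ} (ht : 0 < t) {η : E}
    (hne : η ≠ ξ) (hη : t * dist η ξ * K ≤ 1 / 2) :
    |∫ x, f x ∂(μ η) - ∫ x, f x ∂(μ ξ)| ≤
      (C / t + t / 2 * ∫ x, (f x - ∫ y, f y ∂(μ ξ)) ^ 2 ∂(μ η) + 2 * t ^ 2 * K ^ 3 * dist η ξ) *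
        dist η ξ := by
  set c := ∫ x, f x ∂(μ ξ)
  have hf_int : ∀ ν : Measure E, [IsFiniteMeasure ν] → Integrable f ν := fun _ _ =>
    hf.integrable_of_abs_le (K := K + |c|) fun x => by
      linarith [abs_sub_abs_le_abs_sub (f x) c, hK x]
  have hcentered : ∀ η, ∫ x, (f x - c) ∂(μ η) = ∫ x, f x ∂(μ η) - c := fun η => by
    rw [integral_sub (hf_int _) (integrable_const c)]; simp
  have hd : 0 < dist η ξ := dist_pos.2 hne
  have hbound := hLH.mul_abs_integral_le (hf.sub_const c) hK (ξ := ξ)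
    (by rw [hcentered, sub_self]) (mul_pos ht hd) hη η
  rw [hcentered, dist_comm ξ η] at hbound
  refine le_of_mul_le_mul_left (hbound.trans_eq ?_) (mul_pos ht hd)
  field_simp

lemma LogHarnack.limsup_abs_integral_sub_div_dist_le (hLH : LogHarnack μ C) {f : E → ℝ}
    (hf : Measurable f) {M : ℝ} (hM : ∀ x, |f x| ≤ M) (ξ : E) [(𝓝[≠] ξ).NeBot]
    {t : ℝ} (ht : 0 < t) :
    limsup (fun η => |∫ x, f x ∂(μ η) - ∫ x, f x ∂(μ ξ)| / dist η ξ) (𝓝[≠] ξ) ≤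
      C / t + t / 2 * variance f (μ ξ) := by
  set c := ∫ x, f x ∂(μ ξ)
  set K := M + |c|
  have hK : ∀ x, |f x - c| ≤ K := fun x => (abs_sub _ _).trans (by linarith [hM x])
  have hK_sq : ∀ x, |(f x - c) ^ 2| ≤ K ^ 2 := fun x => by
    rw [abs_pow]; exact pow_le_pow_left₀ (abs_nonneg _) (hK x) 2
  set B : E → ℝ := fun η =>
    C / t + t / 2 * ∫ x, (f x - c) ^ 2 ∂(μ η) + 2 * t ^ 2 * K ^ 3 * dist η ξ
  have hB : Tendsto B (𝓝[≠] ξ) (𝓝 (C / t + t / 2 * variance f (μ ξ))) := by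
    have hsecond := (hLH.tendsto_integral ((hf.sub_const c).pow_const 2) hK_sq ξ).mono_left
      (nhdsWithin_le_nhds (s := {ξ}ᶜ))
    have hdist : Tendsto (fun η => dist η ξ) (𝓝[≠] ξ) (𝓝 0) :=
      ((continuous_id.dist continuous_const).tendsto' ξ 0 (dist_self ξ)).mono_left
        nhdsWithin_le_nhds
    rw [variance_eq_integral hf.aemeasurable]
    simpa using ((hsecond.const_mul (t / 2)).const_add (C / t)).add
      (hdist.const_mul (2 * t ^ 2 * K ^ 3))
  have hsmall : ∀ᶠ η in 𝓝 ξ, t * dist η ξ * K < 1 / 2 :=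
    (by fun_prop : Continuous fun η => t * dist η ξ * K).continuousAt.eventually_lt
      continuousAt_const (by norm_num)
  refine (limsup_le_limsup ?_ (isCoboundedUnder_le_of_le _ fun η => by positivity)
    hB.isBoundedUnder_le).trans_eq hB.limsup_eq
  filter_upwards [self_mem_nhdsWithin, hsmall.filter_mono nhdsWithin_le_nhds] with η hne hη
  rw [div_le_iff₀ (dist_pos.2 hne)]
  exact hLH.abs_integral_sub_le hf hK ht hne hη.le

end LogHarnack

lemma Real.limsup_bot {α : Type*} (u : α → ℝ) : limsup u ⊥ = 0 := by
  simp [limsup_eq]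

lemma Real.le_sqrt_of_forall_le_div_add_mul {a C V : ℝ} (hC : 0 < C) (hV : 0 ≤ V)
    (h : ∀ t > 0, a ≤ C / t + t / 2 * V) : a ≤ √(2 * C * V) := by
  rcases hV.eq_or_lt with rfl | hV
  · rw [mul_zero, Real.sqrt_zero]
    by_contra! ha
    have := h (2 * C / a) (by positivity)
    field_simp at this
    nlinarith
  · set r := √(2 * C * V)
    have hr : 0 < r := by positivity
    have hr_sq : r ^ 2 = 2 * C * V := Real.sq_sqrt (by positivity)
    calc a ≤ C / (r / V) + r / V / 2 * V := h _ (by positivity)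
      _ = r := by field_simp; nlinarith

theorem stmt_11_general {E : Type*} [MetricSpace E] [MeasurableSpace E]
    (μ : E → Measure E) (hprob : ∀ ξ, IsProbabilityMeasure (μ ξ))
    (C : ℝ) (hC : 0 < C)
    (hLH : ∀ f : E → ℝ, Measurable f → (∃ M, ∀ x, |f x| ≤ M) →
      (∃ δ > 0, ∀ x, δ ≤ f x) → ∀ ξ η : E,
        (∫ x, Real.log (f x) ∂(μ η)) ≤ Real.log (∫ x, f x ∂(μ ξ)) + C * dist ξ η ^ 2) :
    ∀ f : E → ℝ, Measurable f → (∃ M, ∀ x, |f x| ≤ M) → ∀ ξ : E,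
      limsup (fun η => |(∫ x, f x ∂(μ η)) - (∫ x, f x ∂(μ ξ))| / dist η ξ)
          (nhdsWithin ξ {ξ}ᶜ)
        ≤ Real.sqrt (2 * C * ((∫ x, (f x) ^ 2 ∂(μ ξ)) - (∫ x, f x ∂(μ ξ)) ^ 2)) := by
  intro f hf ⟨M, hM⟩ ξ
  have := hprob
  have hvar : variance f (μ ξ) = ∫ x, f x ^ 2 ∂(μ ξ) - (∫ x, f x ∂(μ ξ)) ^ 2 :=
    variance_eq_sub (.of_bound hf.aestronglyMeasurable M (.of_forall hM))
  rw [← hvar]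
  rcases eq_or_neBot (𝓝[≠] ξ) with hbot | hne
  · -- `ξ` is isolated, and the real `limsup` along `⊥` is the junk value `0`.
    rw [hbot, Real.limsup_bot]
    positivity
  · exact Real.le_sqrt_of_forall_le_div_add_mul hC (variance_nonneg _ _)
      fun t ht => LogHarnack.limsup_abs_integral_sub_div_dist_le hLH hf hM ξ ht

/-- If a Markov kernel `(μ_ξ)` on a metric space `E` satisfies the
log-Harnack inequality `∫ log f dμ_η ≤ log(∫ f dμ_ξ) + C d(ξ,η)²` for all strictly positive
bounded measurable `f`, then for every bounded measurable `f` and every `ξ`,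
`limsup_{η→ξ, η≠ξ} |P f(η) − P f(ξ)|/d(η,ξ) ≤ √(2C (P f²(ξ) − (P f(ξ))²))`. -/
theorem stmt_11 {E : Type*} [MetricSpace E] [MeasurableSpace E] [BorelSpace E]
    (μ : E → Measure E) (hprob : ∀ ξ, IsProbabilityMeasure (μ ξ))
    (hmeas : ∀ A : Set E, MeasurableSet A → Measurable fun ξ => μ ξ A)
    (C : ℝ) (hC : 0 < C)
    (hLH : ∀ f : E → ℝ, Measurable f → (∃ M, ∀ x, |f x| ≤ M) →
      (∃ δ > 0, ∀ x, δ ≤ f x) → ∀ ξ η : E,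
        (∫ x, Real.log (f x) ∂(μ η)) ≤ Real.log (∫ x, f x ∂(μ ξ)) + C * dist ξ η ^ 2) :
    ∀ f : E → ℝ, Measurable f → (∃ M, ∀ x, |f x| ≤ M) → ∀ ξ : E,
      limsup (fun η => |(∫ x, f x ∂(μ η)) - (∫ x, f x ∂(μ ξ))| / dist η ξ)
          (nhdsWithin ξ {ξ}ᶜ)
        ≤ Real.sqrt (2 * C * ((∫ x, (f x) ^ 2 ∂(μ ξ)) - (∫ x, f x ∂(μ ξ)) ^ 2)) :=
  stmt_11_general μ hprob C hC hLH
end
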